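/- arXiv:2511.16799 — 2 statements merged into one kernel-verified Lean document; each statement's English description precedes it below -/
import Mathlib

section
/- Let T be a rooted tree in which some internal node v has at least 3 non-leaf children, and let T' be obtained from T by replacing two non-leaf subtrees T_1, T_2 of v by a single new child subtree whose root has T_1 and T_2 as its two subtrees (bifurcatization). Then N(T') > N(T), where N counts labeled histories. -/
inductive RTree : Type where
  | leaf : RTree
  | node : List RTree → RTree

namespace RTree

def leaves : RTree → ℕ
  | leaf => 1
  | node cs => (cs.attach.map fun c => leaves c.1).sum
decreasing_by simp only [node.sizeOf_spec]; have := List.sizeOf_lt_of_mem c.2; omega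

def wcount : RTree → ℕ
  | leaf => 0
  | node cs => 1 + (cs.attach.map fun c => wcount c.1).sum
decreasing_by simp only [node.sizeOf_spec]; have := List.sizeOf_lt_of_mem c.2; omega

def delta : RTree → ℕ
  | leaf => 0
  | node cs => 1 + (cs.attach.map fun c => delta c.1).foldr max 0
decreasing_by simp only [node.sizeOf_spec]; have := List.sizeOf_lt_of_mem c.2; omega

def prodW : RTree → ℕ
  | leaf => 1
  | node cs =>
      (1 + (cs.attach.map fun c => wcount c.1).sum) * (cs.attach.map fun c => prodW c.1).prod
decreasing_by simp only [node.sizeOf_spec]; have := List.sizeOf_lt_of_mem c.2; omega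

def subtreeAt : List ℕ → RTree → Option RTree
  | [], t => some t
  | _ :: _, leaf => none
  | i :: p, node cs => (cs[i]?).bind (fun c => subtreeAt p c)

def Internal (T : RTree) : Type := {p : List ℕ // ∃ cs, subtreeAt p T = some (node cs)}

def IsLabeledHistory (T : RTree) (f : Internal T → Fin (wcount T)) : Prop :=
  Function.Bijective f ∧ ∀ u v : Internal T, v.1 <+: u.1 → v.1 ≠ u.1 → f u < f v

noncomputable def N (T : RTree) : ℕ :=
  Nat.card {f : Internal T → Fin (wcount T) // IsLabeledHistory T f}

def IsTieHistory (T : RTree) (z : ℕ) (f : Internal T → Fin z) : Prop :=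
  Function.Surjective f ∧ ∀ u v : Internal T, v.1 <+: u.1 → v.1 ≠ u.1 → f u < f v

noncomputable def E (T : RTree) (z : ℕ) : ℕ :=
  Nat.card {f : Internal T → Fin z // IsTieHistory T z f}

noncomputable def NTie (T : RTree) : ℕ :=
  Nat.card ((z : ℕ) × {f : Internal T → Fin z // IsTieHistory T z f})

def replaceAt : List ℕ → RTree → RTree → RTree
  | [], _, s => s
  | _ :: _, leaf, _ => leaf
  | i :: p, node cs, s => node (cs.set i (replaceAt p (cs.getD i leaf) s))

end RTree

/-!
Apart from the new node `u`, the internal nodes of `T'` are those of `T`, relocated without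
changing the ancestor relation, and `u` sits directly below `v`. Giving `u` the label just below
that of `v` therefore turns every labeled history of `T` injectively into one of `T'`. None of
these puts the third non-leaf child `w` of `v` between `u` and `v`, but some labeled history of
`T'` does: extend the ancestor order of `T'` by `u < w` to a linear order (Szpilrajn).
-/

theorem List.prefix_append_iff_of_not_prefix {α : Type*} {p q x : List α} (h : ¬ p <+: q) :
    q <+: p ++ x ↔ q <+: p := by
  refine ⟨fun hq => ?_, fun hq => hq.trans (List.prefix_append p x)⟩
  rcases List.prefix_or_prefix_of_prefix hq (List.prefix_append p x) with hqp | hpq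
  exacts [hqp, absurd hpq h]

theorem List.exists_ne_getElem?_eq_of_mem {α : Type*} {l₁ l₂ : List α} {t : α} (s : α)
    (h : t ∈ l₁ ++ l₂) : ∃ j ≠ l₁.length, (l₁ ++ s :: l₂)[j]? = some t := by
  obtain ⟨k, hk⟩ := List.getElem?_of_mem h
  refine ⟨if k < l₁.length then k else k + 1, by split_ifs <;> omega, ?_⟩
  rw [← hk]
  simp only [List.getElem?_append, List.getElem?_cons]
  split_ifs <;> first | rfl | omega | (congr 1; omega)

def LinExt (α : Type*) [Preorder α] (n : ℕ) : Type _ :=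
  {f : α → Fin n // Function.Bijective f ∧ StrictMono f}

section LinExt

variable {α β : Type*}

instance [Preorder α] [Finite α] (n : ℕ) : Finite (LinExt α n) :=
  inferInstanceAs (Finite (Subtype _))

theorem exists_bijective_fin_of_isPartialOrder [Finite α] (r : α → α → Prop)
    [IsPartialOrder α r] :
    ∃ f : α → Fin (Nat.card α), Function.Bijective f ∧ ∀ x y, r x y → x ≠ y → f x < f y := by
  obtain ⟨s, hs, hrs⟩ := extend_partialOrder r
  let _ : LinearOrder α :=
    { le := s
      le_refl := hs.refl
      le_trans := fun _ _ _ => hs.trans _ _ _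
      le_antisymm := fun _ _ => hs.antisymm _ _
      le_total := hs.total
      toDecidableLE := Classical.decRel _ }
  let _ := Fintype.ofFinite α
  let e := (monoEquivOfFin α Nat.card_eq_fintype_card.symm).symm
  exact ⟨e, e.bijective, fun x y hxy hne => e.strictMono (lt_of_le_of_ne (hrs _ _ hxy) hne)⟩

theorem exists_linExt_lt [PartialOrder α] [Finite α] {a b : α} (hba : ¬ b ≤ a) :
    ∃ f : LinExt α (Nat.card α), f.1 a < f.1 b := by
  let r : α → α → Prop := fun x y => x ≤ y ∨ (x ≤ a ∧ b ≤ y)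
  have : IsPartialOrder α r :=
    { refl := fun x => Or.inl le_rfl
      trans := by
        rintro x y z (hxy | ⟨hxa, hby⟩) (hyz | ⟨hya, hbz⟩)
        · exact Or.inl (hxy.trans hyz)
        · exact Or.inr ⟨hxy.trans hya, hbz⟩
        · exact Or.inr ⟨hxa, hby.trans hyz⟩
        · exact Or.inr ⟨hxa, hbz⟩
      antisymm := by
        rintro x y (hxy | ⟨hxa, hby⟩) (hyx | ⟨hya, hbx⟩)
        · exact le_antisymm hxy hyx
        · exact absurd (hbx.trans (hxy.trans hya)) hba
        · exact absurd (hby.trans (hyx.trans hxa)) hba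
        · exact absurd (hby.trans hya) hba }
  obtain ⟨f, hbij, hf⟩ := exists_bijective_fin_of_isPartialOrder r
  refine ⟨⟨f, hbij, fun x y hxy => hf x y (Or.inl hxy.le) hxy.ne⟩, ?_⟩
  exact hf a b (Or.inr ⟨le_rfl, le_rfl⟩) fun h => hba (h ▸ le_rfl)

variable {n : ℕ}

/-- Labels `β = α ∪ {e none}` from a labeling of `α`, giving the new element the label of `v`
and shifting every label from there on up by one. -/
def insertLabel (e : Option α ≃ β) (v : α) (f : α → Fin n) : β → Fin (n + 1) :=
  (finSuccEquiv' (f v).castSucc).symm ∘ Option.map f ∘ e.symm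

theorem insertLabel_none (e : Option α ≃ β) (v : α) (f : α → Fin n) :
    insertLabel e v f (e none) = (f v).castSucc := by
  simp [insertLabel]

theorem insertLabel_some (e : Option α ≃ β) (v : α) (f : α → Fin n) (x : α) :
    insertLabel e v f (e (some x)) = (f v).castSucc.succAbove (f x) := by
  simp [insertLabel]

theorem bijective_insertLabel (e : Option α ≃ β) (v : α) {f : α → Fin n}
    (hf : Function.Bijective f) : Function.Bijective (insertLabel e v f) :=
  (finSuccEquiv' _).symm.bijective.comp
    ((Equiv.ofBijective f hf).optionCongr.bijective.comp e.symm.bijective)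

theorem insertLabel_injective (e : Option α ≃ β) (v : α) :
    Function.Injective (insertLabel e v : (α → Fin n) → β → Fin (n + 1)) := by
  intro f g hfg
  have hv : f v = g v := by
    simpa [insertLabel_none] using congrFun hfg (e none)
  funext x
  have hx := congrFun hfg (e (some x))
  rw [insertLabel_some, insertLabel_some, hv] at hx
  exact Fin.succAbove_right_injective hx

variable [PartialOrder α] [PartialOrder β]

theorem strictMono_insertLabel {e : Option α ≃ β} {v : α}
    (hsome : ∀ x y, e (some x) < e (some y) → x < y)
    (hnone_lt : ∀ y, e none < e (some y) → v ≤ y)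
    (hlt_none : ∀ x, e (some x) < e none → x < v)
    {f : α → Fin n} (hf : StrictMono f) : StrictMono (insertLabel e v f) := by
  intro y₁ y₂ hlt
  obtain ⟨o₁, rfl⟩ := e.surjective y₁
  obtain ⟨o₂, rfl⟩ := e.surjective y₂
  rcases o₁ with _ | x <;> rcases o₂ with _ | y
  · exact absurd hlt (lt_irrefl _)
  · have hvy := hf.monotone (hnone_lt y hlt)
    rw [insertLabel_none, insertLabel_some, Fin.succAbove_castSucc_of_le _ _ hvy]
    exact Fin.castSucc_lt_succ_iff.2 hvy
  · rw [insertLabel_none, insertLabel_some, Fin.succAbove_of_castSucc_lt _ _ ?_]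
    all_goals exact Fin.castSucc_lt_castSucc_iff.2 (hf (hlt_none x hlt))
  · rw [insertLabel_some, insertLabel_some]
    exact Fin.strictMono_succAbove _ (hf (hsome x y hlt))

theorem card_linExt_lt_of_insert [Finite α] (e : Option α ≃ β) (v : α)
    (hsome : ∀ x y, e (some x) < e (some y) → x < y)
    (hnone_lt : ∀ y, e none < e (some y) → v ≤ y)
    (hlt_none : ∀ x, e (some x) < e none → x < v)
    {c : β} (hcv : c < e (some v)) (hc : ¬ c ≤ e none) :
    Nat.card (LinExt α (Nat.card α)) < Nat.card (LinExt β (Nat.card β)) := by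
  have : Finite β := Finite.of_equiv _ e
  have hcard : Nat.card β = Nat.card α + 1 := by rw [← Nat.card_congr e, Finite.card_option]
  let F : LinExt α (Nat.card α) → LinExt β (Nat.card α + 1) := fun f =>
    ⟨insertLabel e v f.1, bijective_insertLabel e v f.2.1,
      strictMono_insertLabel hsome hnone_lt hlt_none f.2.2⟩
  have hF : Function.Injective F := fun f g hfg =>
    Subtype.ext (insertLabel_injective e v (congrArg Subtype.val hfg))
  obtain ⟨g, hg⟩ : ∃ g : LinExt β (Nat.card α + 1), g.1 (e none) < g.1 c :=
    hcard ▸ exists_linExt_lt hc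
  -- in the image of `F` the labels of `e none` and of `e (some v)` are consecutive
  have hgF : g ∉ Set.range F := by
    rintro ⟨f, rfl⟩
    have hlt := (F f).2.2 hcv
    simp only [F, insertLabel_none, insertLabel_some, Fin.succAbove_castSucc_self] at hg hlt
    exact absurd (Fin.castSucc_lt_iff_succ_le.1 hg) (not_le.2 hlt)
  rw [hcard]
  let := Fintype.ofFinite (LinExt α (Nat.card α))
  let := Fintype.ofFinite (LinExt β (Nat.card α + 1))
  simpa only [Nat.card_eq_fintype_card] using Fintype.card_lt_of_injective_of_notMem F hF hgF

end LinExt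

namespace RTree

theorem subtreeAt_append (q r : List ℕ) (t : RTree) :
    subtreeAt (q ++ r) t = (subtreeAt q t).bind (subtreeAt r) := by
  induction q generalizing t with
  | nil => rfl
  | cons i q ih =>
    cases t with
    | leaf => rfl
    | node cs => simp only [List.cons_append, subtreeAt, ih, Option.bind_assoc]

theorem subtreeAt_replaceAt_self {p : List ℕ} {t u : RTree} (h : subtreeAt p t = some u)
    (s : RTree) : subtreeAt p (replaceAt p t s) = some s := by
  induction p generalizing t u with
  | nil => rfl
  | cons i p ih =>
    cases t with
    | leaf => simp [subtreeAt] at h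
    | node cs =>
      obtain ⟨c, hc, hcu⟩ := Option.bind_eq_some_iff.1 h
      have hi : i < cs.length := (List.getElem?_eq_some_iff.1 hc).1
      simp only [replaceAt, subtreeAt, List.getElem?_set_self hi, Option.bind_some,
        List.getD_eq_getElem?_getD, hc, Option.getD_some, ih hcu]

theorem subtreeAt_replaceAt_of_not_prefix {p q : List ℕ} (t s : RTree) (hpq : ¬ p <+: q)
    (hqp : ¬ q <+: p) : subtreeAt q (replaceAt p t s) = subtreeAt q t := by
  induction q generalizing p t with
  | nil => exact absurd List.nil_prefix hqp
  | cons j q ih =>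
    cases p with
    | nil => exact absurd List.nil_prefix hpq
    | cons i p =>
      cases t with
      | leaf => rfl
      | node cs =>
        simp only [replaceAt, subtreeAt]
        by_cases hij : i = j
        · subst hij
          simp only [List.cons_prefix_cons, true_and] at hpq hqp
          by_cases hi : i < cs.length
          · simp [List.getElem?_set_self hi, List.getElem?_eq_getElem hi, ih _ hpq hqp]
          · simp [hi]
        · rw [List.getElem?_set_ne hij]

def IsInternal (t : RTree) (q : List ℕ) : Prop := ∃ cs, subtreeAt q t = some (node cs)

theorem isInternal_nil (cs : List RTree) : IsInternal (node cs) [] := ⟨cs, rfl⟩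

theorem isInternal_append_iff {t u : RTree} {p : List ℕ} (h : subtreeAt p t = some u)
    (m : List ℕ) : IsInternal t (p ++ m) ↔ IsInternal u m := by
  simp only [IsInternal, subtreeAt_append, h, Option.bind_some]

theorem isInternal_of_prefix {t u : RTree} {p q : List ℕ} (h : subtreeAt p t = some u)
    (hqp : q <+: p) (hne : q ≠ p) : IsInternal t q := by
  obtain ⟨r, rfl⟩ := hqp
  rw [subtreeAt_append] at h
  obtain ⟨w, hw, hwu⟩ := Option.bind_eq_some_iff.1 h
  cases w with
  | node cs => exact ⟨cs, hw⟩
  | leaf =>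
    cases r with
    | nil => exact absurd (List.append_nil q).symm hne
    | cons _ _ => simp [subtreeAt] at hwu

theorem isInternal_replaceAt_iff {t u : RTree} {p q : List ℕ} (h : subtreeAt p t = some u)
    (s : RTree) (hpq : ¬ p <+: q) : IsInternal (replaceAt p t s) q ↔ IsInternal t q := by
  by_cases hqp : q <+: p
  · have hne : q ≠ p := fun hq => hpq (hq ▸ List.prefix_refl q)
    exact iff_of_true (isInternal_of_prefix (subtreeAt_replaceAt_self h s) hqp hne)
      (isInternal_of_prefix h hqp hne)
  · simp only [IsInternal, subtreeAt_replaceAt_of_not_prefix t s hpq hqp]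

theorem isInternal_cons_iff {l : List RTree} {i : ℕ} {r : List ℕ} :
    IsInternal (node l) (i :: r) ↔ ∃ h : i < l.length, IsInternal l[i] r := by
  simp only [IsInternal, subtreeAt, Option.bind_eq_some_iff, List.getElem?_eq_some_iff]
  constructor
  · rintro ⟨cs, c, ⟨hi, rfl⟩, hc⟩
    exact ⟨hi, cs, hc⟩
  · rintro ⟨hi, cs, hc⟩
    exact ⟨cs, l[i], ⟨hi, rfl⟩, hc⟩

def nodeChild (l : List RTree) : Option ((i : Fin l.length) × Internal l[i]) → Internal (node l)
  | none => ⟨[], isInternal_nil l⟩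
  | some ⟨i, r⟩ => ⟨i :: r.1, isInternal_cons_iff.2 ⟨i.2, r.2⟩⟩

theorem nodeChild_bijective (l : List RTree) : Function.Bijective (nodeChild l) := by
  constructor
  · intro o o' h
    replace h := congrArg Subtype.val h
    rcases o with _ | ⟨i, r⟩ <;> rcases o' with _ | ⟨j, r'⟩ <;>
      simp only [nodeChild, List.cons.injEq, reduceCtorEq] at h
    · rfl
    · obtain ⟨hij, hr⟩ := h
      obtain rfl : i = j := Fin.ext hij
      obtain rfl : r = r' := Subtype.ext hr
      rfl
  · rintro ⟨_ | ⟨i, r⟩, h⟩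
    · exact ⟨none, rfl⟩
    · obtain ⟨hi, hr⟩ := isInternal_cons_iff.1 h
      exact ⟨some ⟨⟨i, hi⟩, ⟨r, hr⟩⟩, rfl⟩

instance : IsEmpty (Internal leaf) :=
  ⟨fun ⟨q, _, h⟩ => by cases q <;> simp [subtreeAt] at h⟩

theorem finite_internal : (t : RTree) → Finite (Internal t)
  | leaf => inferInstance
  | node l =>
    have : ∀ i : Fin l.length, Finite (Internal l[i]) := fun i => finite_internal l[i]
    Finite.of_surjective _ (nodeChild_bijective l).2
decreasing_by
  have := List.sizeOf_lt_of_mem (List.getElem_mem i.2)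
  simp only [node.sizeOf_spec, Fin.getElem_fin]
  omega

instance (t : RTree) : Finite (Internal t) := finite_internal t

theorem card_internal : (t : RTree) → Nat.card (Internal t) = wcount t
  | leaf => by rw [Nat.card_of_isEmpty, wcount]
  | node l => by
    have ih : ∀ i : Fin l.length, Nat.card (Internal l[i]) = wcount l[i] :=
      fun i => card_internal l[i]
    rw [← Nat.card_congr (Equiv.ofBijective _ (nodeChild_bijective l)), Finite.card_option,
      Nat.card_sigma, Finset.sum_congr rfl fun i _ => ih i, wcount, List.attach_map_val,
      add_comm]
    simp only [Fin.getElem_fin, Fin.sum_univ_fun_getElem]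
decreasing_by
  have := List.sizeOf_lt_of_mem (List.getElem_mem i.2)
  simp only [node.sizeOf_spec, Fin.getElem_fin]
  omega

/-- `u ≤ w` when `w` is an ancestor of `u`, so that labeled histories become linear
extensions. -/
instance (t : RTree) : PartialOrder (Internal t) where
  le u w := w.1 <+: u.1
  le_refl u := List.prefix_refl u.1
  le_trans _ _ _ h₁ h₂ := h₂.trans h₁
  le_antisymm _ _ h₁ h₂ := Subtype.ext (h₂.eq_of_length (h₂.length_le.antisymm h₁.length_le))

theorem Internal.le_iff {t : RTree} {u w : Internal t} : u ≤ w ↔ w.1 <+: u.1 := Iff.rfl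

theorem Internal.lt_iff {t : RTree} {u w : Internal t} : u < w ↔ w.1 <+: u.1 ∧ ¬ u.1 <+: w.1 :=
  lt_iff_le_not_ge

theorem isLabeledHistory_iff {t : RTree} {f : Internal t → Fin (wcount t)} :
    IsLabeledHistory t f ↔ Function.Bijective f ∧ StrictMono f := by
  refine and_congr_right fun _ => forall₂_congr fun u w => ?_
  have hlt : u < w ↔ w.1 <+: u.1 ∧ w.1 ≠ u.1 :=
    lt_iff_le_and_ne.trans (and_congr_right' (ne_comm.trans Subtype.val_injective.ne_iff.symm))
  rw [hlt, and_imp]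

theorem N_eq_card_linExt (t : RTree) :
    N t = Nat.card (LinExt (Internal t) (Nat.card (Internal t))) := by
  rw [card_internal]
  exact Nat.card_congr (Equiv.subtypeEquivRight fun _ => isLabeledHistory_iff)

/-- The path, in `node (l₁ ++ node [t₁, t₂] :: (l₂ ++ l₃))`, of child `i` of
`node (l₁ ++ t₁ :: (l₂ ++ t₂ :: l₃))`, where `a = l₁.length` and `b = l₂.length`. -/
def bifChild (a b i : ℕ) : List ℕ :=
  if i = a then [a, 0] else if i = a + b + 1 then [a, 1] else if a + b + 1 < i then [i - 1] else [i]

def bifPath (a b : ℕ) : List ℕ → List ℕ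
  | [] => []
  | i :: r => bifChild a b i ++ r

theorem bifChild_ne_nil (a b i : ℕ) : bifChild a b i ≠ [] := by
  unfold bifChild; split_ifs <;> simp

theorem eq_of_bifChild_prefix {a b i j : ℕ} (h : bifChild a b i <+: bifChild a b j) : i = j := by
  unfold bifChild at h; split_ifs at h <;> simp_all <;> omega

theorem bifPath_prefix_iff (a b : ℕ) :
    ∀ m₁ m₂ : List ℕ, bifPath a b m₁ <+: bifPath a b m₂ ↔ m₁ <+: m₂
  | [], _ => iff_of_true List.nil_prefix List.nil_prefix
  | i :: r, [] => by simp [bifPath, bifChild_ne_nil]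
  | i :: r, j :: s => by
    simp only [bifPath, List.cons_prefix_cons]
    constructor
    · intro h
      have hij : i = j := by
        rcases List.prefix_or_prefix_of_prefix ((List.prefix_append _ r).trans h)
          (List.prefix_append _ s) with hp | hp
        exacts [eq_of_bifChild_prefix hp, (eq_of_bifChild_prefix hp).symm]
      subst hij
      exact ⟨rfl, List.prefix_append_right_inj _ |>.1 h⟩
    · rintro ⟨rfl, h⟩
      exact List.prefix_append_right_inj _ |>.2 h

theorem bifPath_ne_singleton (a b : ℕ) (m : List ℕ) : bifPath a b m ≠ [a] := by
  rcases m with _ | ⟨i, r⟩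
  · simp [bifPath]
  · simp only [bifPath, bifChild]; split_ifs <;> simp <;> omega

section

variable (l₁ l₂ l₃ : List RTree) (t₁ t₂ : RTree)

theorem subtreeAt_bifChild (i : ℕ) :
    subtreeAt (bifChild l₁.length l₂.length i) (node (l₁ ++ node [t₁, t₂] :: (l₂ ++ l₃))) =
      (l₁ ++ t₁ :: (l₂ ++ t₂ :: l₃))[i]? := by
  unfold bifChild
  split_ifs <;> simp [subtreeAt, List.getElem?_append, List.getElem?_cons] <;> split_ifs <;>
    first | rfl | omega | (congr 1; omega)

theorem isInternal_bifPath_iff : ∀ m : List ℕ,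
    IsInternal (node (l₁ ++ node [t₁, t₂] :: (l₂ ++ l₃))) (bifPath l₁.length l₂.length m) ↔
      IsInternal (node (l₁ ++ t₁ :: (l₂ ++ t₂ :: l₃))) m
  | [] => iff_of_true (isInternal_nil _) (isInternal_nil _)
  | i :: r => by simp only [IsInternal, bifPath, subtreeAt_append, subtreeAt_bifChild, subtreeAt]

variable {l₁ l₂ l₃ t₁ t₂} in
theorem exists_bifPath_eq {m' : List ℕ}
    (h : IsInternal (node (l₁ ++ node [t₁, t₂] :: (l₂ ++ l₃))) m') (hm' : m' ≠ [l₁.length]) :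
    ∃ m, bifPath l₁.length l₂.length m = m' := by
  rcases m' with _ | ⟨i, r⟩
  · exact ⟨[], rfl⟩
  by_cases hi : i = l₁.length
  · subst hi
    rcases r with _ | ⟨j, r⟩
    · exact absurd rfl hm'
    obtain ⟨_, h⟩ := isInternal_cons_iff.1 h
    simp only [List.getElem_append_right le_rfl, Nat.sub_self, List.getElem_cons_zero] at h
    obtain ⟨hj, -⟩ := isInternal_cons_iff.1 h
    obtain rfl | rfl : j = 0 ∨ j = 1 := by simp at hj; omega
    · exact ⟨l₁.length :: r, by simp [bifPath, bifChild]⟩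
    · refine ⟨(l₁.length + l₂.length + 1) :: r, ?_⟩
      simp [bifPath, bifChild, show l₁.length + l₂.length + 1 ≠ l₁.length by omega]
  · refine ⟨(if i ≤ l₁.length + l₂.length then i else i + 1) :: r, ?_⟩
    simp only [bifPath, bifChild]
    split_ifs <;> simp <;> omega

end

def mapUnder (p : List ℕ) (f : List ℕ → List ℕ) (q : List ℕ) : List ℕ :=
  if p <+: q then p ++ f (q.drop p.length) else q

theorem mapUnder_append (p m : List ℕ) (f : List ℕ → List ℕ) :
    mapUnder p f (p ++ m) = p ++ f m := by
  rw [mapUnder, if_pos (List.prefix_append p m), List.drop_left]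

theorem mapUnder_of_not_prefix {p q : List ℕ} (f : List ℕ → List ℕ) (h : ¬ p <+: q) :
    mapUnder p f q = q :=
  if_neg h

theorem mapUnder_prefix_iff {f : List ℕ → List ℕ} (hf : ∀ m₁ m₂, f m₁ <+: f m₂ ↔ m₁ <+: m₂)
    (p q₁ q₂ : List ℕ) : mapUnder p f q₁ <+: mapUnder p f q₂ ↔ q₁ <+: q₂ := by
  by_cases h₁ : p <+: q₁ <;> by_cases h₂ : p <+: q₂
  · obtain ⟨m₁, rfl⟩ := h₁
    obtain ⟨m₂, rfl⟩ := h₂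
    simp only [mapUnder_append, List.prefix_append_right_inj, hf]
  · obtain ⟨m₁, rfl⟩ := h₁
    rw [mapUnder_append, mapUnder_of_not_prefix f h₂]
    exact iff_of_false (fun h => h₂ ((List.prefix_append p _).trans h))
      (fun h => h₂ ((List.prefix_append p _).trans h))
  · obtain ⟨m₂, rfl⟩ := h₂
    rw [mapUnder_append, mapUnder_of_not_prefix f h₁,
      List.prefix_append_iff_of_not_prefix h₁, List.prefix_append_iff_of_not_prefix h₁]
  · rw [mapUnder_of_not_prefix f h₁, mapUnder_of_not_prefix f h₂]

theorem mapUnder_injective {f : List ℕ → List ℕ} (hf : ∀ m₁ m₂, f m₁ <+: f m₂ ↔ m₁ <+: m₂)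
    (p : List ℕ) : Function.Injective (mapUnder p f) := by
  intro q₁ q₂ h
  have h₁ := (mapUnder_prefix_iff hf p q₁ q₂).1 (h ▸ List.prefix_refl _)
  have h₂ := (mapUnder_prefix_iff hf p q₂ q₁).1 (h ▸ List.prefix_refl _)
  exact h₁.eq_of_length (h₁.length_le.antisymm h₂.length_le)

theorem mapUnder_bifPath_ne (p : List ℕ) (a b : ℕ) (q : List ℕ) :
    mapUnder p (bifPath a b) q ≠ p ++ [a] := by
  by_cases hpq : p <+: q
  · obtain ⟨m, rfl⟩ := hpq
    rw [mapUnder_append, Ne, List.append_cancel_left_eq]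
    exact bifPath_ne_singleton a b m
  · rw [mapUnder_of_not_prefix _ hpq]
    rintro rfl
    exact hpq (List.prefix_append p [a])

section Bifurcation

variable {T : RTree} {p : List ℕ} {l₁ l₂ l₃ : List RTree} {t₁ t₂ : RTree}
  (hsub : subtreeAt p T = some (node (l₁ ++ t₁ :: (l₂ ++ t₂ :: l₃))))
include hsub

theorem isInternal_mapUnder_bifPath_iff (q : List ℕ) :
    IsInternal (replaceAt p T (node (l₁ ++ node [t₁, t₂] :: (l₂ ++ l₃))))
      (mapUnder p (bifPath l₁.length l₂.length) q) ↔ IsInternal T q := by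
  by_cases hpq : p <+: q
  · obtain ⟨m, rfl⟩ := hpq
    rw [mapUnder_append, isInternal_append_iff (subtreeAt_replaceAt_self hsub _),
      isInternal_append_iff hsub, isInternal_bifPath_iff]
  · rw [mapUnder_of_not_prefix _ hpq, isInternal_replaceAt_iff hsub _ hpq]

theorem exists_mapUnder_bifPath_eq {q' : List ℕ}
    (h : IsInternal (replaceAt p T (node (l₁ ++ node [t₁, t₂] :: (l₂ ++ l₃)))) q')
    (hq' : q' ≠ p ++ [l₁.length]) : ∃ q, mapUnder p (bifPath l₁.length l₂.length) q = q' := by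
  by_cases hpq : p <+: q'
  · obtain ⟨m', rfl⟩ := hpq
    rw [isInternal_append_iff (subtreeAt_replaceAt_self hsub _)] at h
    obtain ⟨m, rfl⟩ := exists_bifPath_eq h fun hm' => hq' (hm' ▸ rfl)
    exact ⟨p ++ m, mapUnder_append _ _ _⟩
  · exact ⟨q', mapUnder_of_not_prefix _ hpq⟩

def bifurcationMap : Option (Internal T) →
    Internal (replaceAt p T (node (l₁ ++ node [t₁, t₂] :: (l₂ ++ l₃))))
  | none => ⟨p ++ [l₁.length], (isInternal_append_iff (subtreeAt_replaceAt_self hsub _) _).2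
      ⟨[t₁, t₂], by simp [subtreeAt]⟩⟩
  | some x => ⟨mapUnder p (bifPath l₁.length l₂.length) x.1,
      (isInternal_mapUnder_bifPath_iff hsub x.1).2 x.2⟩

theorem bifurcationMap_bijective : Function.Bijective (bifurcationMap hsub) := by
  constructor
  · intro o o' h
    replace h := congrArg Subtype.val h
    rcases o with _ | x <;> rcases o' with _ | y <;> simp only [bifurcationMap] at h
    · rfl
    · exact absurd h.symm (mapUnder_bifPath_ne _ _ _ _)
    · exact absurd h (mapUnder_bifPath_ne _ _ _ _)
    · exact congrArg some (Subtype.ext (mapUnder_injective (bifPath_prefix_iff _ _) p h))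
  · rintro ⟨q', hq'⟩
    by_cases hnew : q' = p ++ [l₁.length]
    · exact ⟨none, Subtype.ext hnew.symm⟩
    · obtain ⟨q, rfl⟩ := exists_mapUnder_bifPath_eq hsub hq' hnew
      exact ⟨some ⟨q, (isInternal_mapUnder_bifPath_iff hsub q).1 hq'⟩, rfl⟩

theorem card_linExt_lt_bifurcation {j : ℕ} (hj : j ≠ l₁.length)
    (hc : IsInternal (node (l₁ ++ node [t₁, t₂] :: (l₂ ++ l₃))) [j]) :
    Nat.card (LinExt (Internal T) (Nat.card (Internal T))) <
      Nat.card (LinExt (Internal (replaceAt p T (node (l₁ ++ node [t₁, t₂] :: (l₂ ++ l₃)))))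
        (Nat.card (Internal (replaceAt p T (node (l₁ ++ node [t₁, t₂] :: (l₂ ++ l₃))))))) := by
  set σ := mapUnder p (bifPath l₁.length l₂.length)
  have hσ : ∀ q₁ q₂, σ q₁ <+: σ q₂ ↔ q₁ <+: q₂ := mapUnder_prefix_iff (bifPath_prefix_iff _ _) p
  have hσp : σ p = p := by
    simpa [bifPath] using mapUnder_append p [] (bifPath l₁.length l₂.length)
  let v : Internal T := ⟨p, _, hsub⟩
  let c : Internal (replaceAt p T (node (l₁ ++ node [t₁, t₂] :: (l₂ ++ l₃)))) :=
    ⟨p ++ [j], (isInternal_append_iff (subtreeAt_replaceAt_self hsub _) _).2 hc⟩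
  refine card_linExt_lt_of_insert (Equiv.ofBijective _ (bifurcationMap_bijective hsub)) v
    (c := c) ?_ ?_ ?_ ?_ ?_ <;>
    simp only [Equiv.ofBijective_apply, Internal.lt_iff, Internal.le_iff]
  · rintro x y ⟨hle, hnot⟩
    exact ⟨(hσ _ _).1 hle, fun h => hnot ((hσ _ _).2 h)⟩
  · rintro y ⟨hle, hnot⟩
    change σ y.1 <+: p ++ [l₁.length] at hle
    change ¬ p ++ [l₁.length] <+: σ y.1 at hnot
    rcases List.prefix_concat_iff.1 hle with heq | hle
    · exact absurd (heq ▸ List.prefix_refl _) hnot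
    · exact (hσ _ _).1 (hσp ▸ hle)
  · rintro x ⟨hle, hnot⟩
    change p ++ [l₁.length] <+: σ x.1 at hle
    change ¬ σ x.1 <+: p ++ [l₁.length] at hnot
    refine ⟨(hσ _ _).1 (hσp ▸ (List.prefix_append p _).trans hle), fun hxp => hnot ?_⟩
    exact ((hσ _ _).2 hxp).trans (hσp ▸ List.prefix_append p _)
  · show σ p <+: p ++ [j] ∧ ¬ p ++ [j] <+: σ p
    rw [hσp]
    exact ⟨List.prefix_append p [j], fun h => by simpa using h.length_le⟩
  · show ¬ p ++ [l₁.length] <+: p ++ [j]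
    rw [List.prefix_append_right_inj]
    simpa using hj.symm

end Bifurcation

theorem N_lt_of_bifurcatization_general (T T' : RTree) (p : List ℕ)
    (cs l₁ l₂ l₃ : List RTree) (t₁ t₂ : RTree)
    (hsub : subtreeAt p T = some (node cs))
    (hcs : cs = l₁ ++ t₁ :: l₂ ++ t₂ :: l₃)
    (h3 : ∃ t₃ ∈ l₁ ++ l₂ ++ l₃, t₃ ≠ leaf)
    (hT' : T' = replaceAt p T (node (l₁ ++ node [t₁, t₂] :: l₂ ++ l₃))) :
    N T < N T' := by
  subst hcs hT'
  obtain ⟨t₃, ht₃, ht₃_ne⟩ := h3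
  obtain ⟨ds, rfl⟩ : ∃ ds, t₃ = node ds := by
    cases t₃ with
    | leaf => exact absurd rfl ht₃_ne
    | node ds => exact ⟨ds, rfl⟩
  obtain ⟨j, hj, hjt⟩ :=
    List.exists_ne_getElem?_eq_of_mem (node [t₁, t₂]) (List.append_assoc l₁ l₂ l₃ ▸ ht₃)
  simp only [List.append_assoc, List.cons_append] at hsub ⊢
  rw [N_eq_card_linExt, N_eq_card_linExt]
  exact card_linExt_lt_bifurcation hsub hj ⟨ds, by simp [subtreeAt, hjt]⟩

/-- bifurcatization strictly increases the number of labeled histories.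
If an internal node `v` of `T` (at position `p`) has children `cs` containing at
least three non-leaf subtrees, and `T'` is obtained by replacing two non-leaf
children `t₁, t₂` of `v` by a single new child whose two subtrees are `t₁` and
`t₂`, then `N(T') > N(T)`. -/
theorem N_lt_of_bifurcatization (T T' : RTree) (p : List ℕ)
    (cs l₁ l₂ l₃ : List RTree) (t₁ t₂ : RTree)
    (hsub : subtreeAt p T = some (node cs))
    (hcs : cs = l₁ ++ t₁ :: l₂ ++ t₂ :: l₃)
    (h1 : t₁ ≠ leaf) (h2 : t₂ ≠ leaf)
    (h3 : ∃ t₃ ∈ l₁ ++ l₂ ++ l₃, t₃ ≠ leaf)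
    (hT' : T' = replaceAt p T (node (l₁ ++ node [t₁, t₂] :: l₂ ++ l₃))) :
    N T < N T' :=
  N_lt_of_bifurcatization_general T T' p cs l₁ l₂ l₃ t₁ t₂ hsub hcs h3 hT'

end RTree
end

section
/- For n ≥ 2, S_r(n) ≥ A_r(n), where A_r(1) = S_r(1) = 1, A_r(n) = Σ_{i=2}^{min(n,r)} C(n,i) A_r(n+1-i), and S_r(n) = Σ over tuples (x₂,...,x_r) with 2 ≤ Σ j·x_j ≤ n of [n! / (∏_j (j!)^{x_j} x_j! · (n - Σ j x_j)!)] · S_r(n - Σ (j-1)x_j). -/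
/-- `A r n`: total number of labeled histories (no simultaneity) across all
at-most-`r`-furcating labeled topologies with `n` leaves:
`A r 1 = 1` and `A r n = ∑_{i=2}^{min n r} C(n,i) * A r (n+1-i)` for `n ≥ 2`. -/
def A (r : ℕ) : ℕ → ℕ
  | 0 => 1
  | 1 => 1
  | n + 2 =>
      ∑ i ∈ (Finset.Icc 2 (min (n + 2) r)).attach,
        Nat.choose (n + 2) i.1 * A r (n + 2 + 1 - i.1)
decreasing_by have := i.2; rw [Finset.mem_Icc] at this; omega

/-- `S r n`: total number of tie-permitting labeled histories across all
at-most-`r`-furcating labeled topologies with `n` leaves: `S r 1 = 1` and for `n ≥ 2`,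
`S r n` sums, over tuples `(x₂,…,x_r)` with `2 ≤ ∑ j x_j ≤ n`, the term
`n! / (∏_j (j!)^{x_j} x_j! ⬝ (n - ∑ j x_j)!) ⬝ S r (n - ∑ (j-1) x_j)`.
Tuples are encoded as functions `x : Fin (r+1) → ℕ` with `x j = 0` for `j < 2`. -/
def S (r : ℕ) : ℕ → ℕ
  | 0 => 1
  | 1 => 1
  | n + 2 =>
      ∑ x ∈ ((Fintype.piFinset
            (fun j : Fin (r + 1) =>
              if 2 ≤ (j : ℕ) then Finset.range (n + 3) else {0})).filter
          (fun x => 2 ≤ ∑ j : Fin (r + 1), (j : ℕ) * x j ∧ ∑ j : Fin (r + 1), (j : ℕ) * x j ≤ n + 2)).attach,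
        Nat.factorial (n + 2) /
            ((∏ j : Fin (r + 1), Nat.factorial (j : ℕ) ^ x.1 j * Nat.factorial (x.1 j)) *
              Nat.factorial (n + 2 - ∑ j : Fin (r + 1), (j : ℕ) * x.1 j))
          * S r (n + 2 - ∑ j : Fin (r + 1), ((j : ℕ) - 1) * x.1 j)
decreasing_by
  have hx := x.2
  rw [Finset.mem_filter, Fintype.mem_piFinset] at hx
  obtain ⟨hpi, h2, hle⟩ := hx
  have key : 1 ≤ ∑ j : Fin (r + 1), ((j : ℕ) - 1) * x.1 j := by
    rcases Nat.eq_zero_or_pos (∑ j : Fin (r + 1), ((j : ℕ) - 1) * x.1 j) with h0 | h1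
    · exfalso
      have hz := Finset.sum_eq_zero_iff.mp h0
      have hall : ∀ j : Fin (r + 1), (j : ℕ) * x.1 j = 0 := by
        intro j
        by_cases hj : 2 ≤ (j : ℕ)
        · have hj0 := hz j (Finset.mem_univ j)
          have hxj : x.1 j = 0 := by
            rcases Nat.mul_eq_zero.mp hj0 with h | h
            · omega
            · exact h
          simp [hxj]
        · have hmem := hpi j
          rw [dif_neg hj] at hmem
          rw [Finset.mem_singleton] at hmem
          simp [hmem]
      have hs : (∑ j : Fin (r + 1), (j : ℕ) * x.1 j) = 0 :=
        Finset.sum_eq_zero (fun j _ => hall j)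
      omega
    · exact h1
  omega

/-!
A history without simultaneity is a tie-permitting history in which every step is a single
coalescence. In the recursions, the `i`-th term of `A r n` sits inside `S r n` as the term of the
pattern with `x_i = 1` and all other `x_j = 0`: its coefficient `n! / (i! (n - i)!)` is `C(n, i)`
and it leads to `n - (i - 1)` lineages. Strong induction on `n` then compares the sums termwise.
-/

open Nat Fin.NatCast

def coalescencePatterns (r m : ℕ) : Finset (Fin (r + 1) → ℕ) :=
  (Fintype.piFinset fun j : Fin (r + 1) => if 2 ≤ (j : ℕ) then Finset.range (m + 1) else {0}).filter
    fun x => 2 ≤ ∑ j : Fin (r + 1), (j : ℕ) * x j ∧ ∑ j : Fin (r + 1), (j : ℕ) * x j ≤ m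

def patternTerm (r m : ℕ) (x : Fin (r + 1) → ℕ) : ℕ :=
  m ! / ((∏ j : Fin (r + 1), (j : ℕ)! ^ x j * (x j)!) * (m - ∑ j : Fin (r + 1), (j : ℕ) * x j)!) *
    S r (m - ∑ j : Fin (r + 1), ((j : ℕ) - 1) * x j)

def singlePattern (r i : ℕ) : Fin (r + 1) → ℕ :=
  Pi.single (i : Fin (r + 1)) 1

lemma A_add_two (r n : ℕ) :
    A r (n + 2) = ∑ i ∈ Finset.Icc 2 (min (n + 2) r), (n + 2).choose i * A r (n + 2 + 1 - i) := by
  rw [A, Finset.sum_attach _ fun i => (n + 2).choose i * A r (n + 2 + 1 - i)]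

lemma S_add_two (r n : ℕ) :
    S r (n + 2) = ∑ x ∈ coalescencePatterns r (n + 2), patternTerm r (n + 2) x := by
  rw [S]
  exact Finset.sum_attach (coalescencePatterns r (n + 2)) (patternTerm r (n + 2))

section SinglePattern

variable {ι : Type*} [Fintype ι] [DecidableEq ι]

lemma Fintype.sum_mul_single_one (f : ι → ℕ) (i : ι) :
    ∑ j, f j * (Pi.single i 1 : ι → ℕ) j = f i := by
  rw [Fintype.sum_eq_single i fun j hj => by simp [hj]]
  simp

lemma Fintype.prod_pow_single_one_mul_factorial (g : ι → ℕ) (i : ι) :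
    ∏ j, g j ^ (Pi.single i 1 : ι → ℕ) j * ((Pi.single i 1 : ι → ℕ) j)! = g i := by
  rw [Fintype.prod_eq_single i fun j hj => by simp [hj]]
  simp

variable {r m i : ℕ}

lemma Fin.val_natCast_of_le (hir : i ≤ r) : ((i : Fin (r + 1)) : ℕ) = i :=
  Fin.val_cast_of_lt (Nat.lt_succ_of_le hir)

lemma singlePattern_injOn : Set.InjOn (singlePattern r) (Set.Iic r) := by
  intro a ha b hb hab
  have := congrFun hab (a : Fin (r + 1))
  simp only [singlePattern, Pi.single_eq_same, Pi.single_apply] at this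
  split_ifs at this with h
  rwa [Fin.ext_iff, Fin.val_natCast_of_le ha, Fin.val_natCast_of_le hb] at h

lemma singlePattern_mem_coalescencePatterns (hi : 2 ≤ i) (him : i ≤ m) (hir : i ≤ r) :
    singlePattern r i ∈ coalescencePatterns r m := by
  have hsum : ∑ j : Fin (r + 1), (j : ℕ) * singlePattern r i j = i := by
    rw [singlePattern, Fintype.sum_mul_single_one, Fin.val_natCast_of_le hir]
  refine Finset.mem_filter.2 ⟨Fintype.mem_piFinset.2 fun j => ?_, by omega, by omega⟩
  split_ifs with hj
  · exact Finset.mem_range.2 (by rw [singlePattern, Pi.single_apply]; split_ifs <;> omega)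
  · have : j ≠ i := fun h => hj (by rw [h, Fin.val_natCast_of_le hir]; exact hi)
    simp [singlePattern, this]

lemma patternTerm_singlePattern (hi : 0 < i) (him : i ≤ m) (hir : i ≤ r) :
    patternTerm r m (singlePattern r i) = m.choose i * S r (m + 1 - i) := by
  rw [patternTerm, singlePattern, Fintype.sum_mul_single_one, Fintype.sum_mul_single_one,
    Fintype.prod_pow_single_one_mul_factorial, Fin.val_natCast_of_le hir,
    ← Nat.choose_eq_factorial_div_factorial him, show m - (i - 1) = m + 1 - i by omega]

end SinglePattern

theorem S_ge_A_general (r n : ℕ) : A r n ≤ S r n := by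
  induction n using Nat.strong_induction_on with
  | _ n ih =>
    match n with
    | 0 | 1 => simp [A, S]
    | n + 2 =>
      set I := Finset.Icc 2 (min (n + 2) r)
      have hI : ∀ i ∈ I, 2 ≤ i ∧ i ≤ n + 2 ∧ i ≤ r := fun i hi => by
        simp only [I, Finset.mem_Icc, le_min_iff] at hi
        exact ⟨hi.1, hi.2⟩
      calc A r (n + 2) = ∑ i ∈ I, (n + 2).choose i * A r (n + 2 + 1 - i) := A_add_two r n
        _ ≤ ∑ i ∈ I, (n + 2).choose i * S r (n + 2 + 1 - i) :=
          Finset.sum_le_sum fun i hi => Nat.mul_le_mul_left _ (ih _ (by have := hI i hi; omega))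
        _ = ∑ i ∈ I, patternTerm r (n + 2) (singlePattern r i) :=
          Finset.sum_congr rfl fun i hi =>
            (patternTerm_singlePattern (by have := hI i hi; omega) (hI i hi).2.1 (hI i hi).2.2).symm
        _ = ∑ x ∈ I.image (singlePattern r), patternTerm r (n + 2) x :=
          (Finset.sum_image fun a ha b hb => singlePattern_injOn (hI a ha).2.2 (hI b hb).2.2).symm
        _ ≤ ∑ x ∈ coalescencePatterns r (n + 2), patternTerm r (n + 2) x :=
          Finset.sum_le_sum_of_subset fun x hx => by
            obtain ⟨i, hi, rfl⟩ := Finset.mem_image.1 hx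
            exact singlePattern_mem_coalescencePatterns (hI i hi).1 (hI i hi).2.1 (hI i hi).2.2
        _ = S r (n + 2) := (S_add_two r n).symm

/-- for `r ≥ 2` and `n ≥ 2`, `S_r(n) ≥ A_r(n)`. -/
theorem S_ge_A (r n : ℕ) (hr : 2 ≤ r) (hn : 2 ≤ n) : A r n ≤ S r n :=
  S_ge_A_general r n
end
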